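/- arXiv:2212.00745 — 6 statements merged into one kernel-verified Lean document; each statement's English description precedes it below -/
import Mathlib

section
/- In any (θ₁, θ₂, …, θ_k)-representation of nK₃ with θ₁ < θ₂ < ⋯ < θ_k, no two distinct triangles have the same color, i.e., no two distinct triangles have the same multiset of colors on their edges. -/
open Finset

/-- The disjoint union of `n` copies of the complete graph `K_m`,
on vertex set `Fin n × Fin m`. -/
def copiesK (n m : ℕ) : SimpleGraph (Fin n × Fin m) where
  Adj x y := x.1 = y.1 ∧ x ≠ y
  symm := ⟨fun x y h => ⟨h.1.symm, h.2.symm⟩⟩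
  loopless := ⟨fun x h => h.2 rfl⟩

/-- The complete `n`-partite graph with `m` vertices in each part,
on vertex set `Fin n × Fin m`. -/
def completeMulti (n m : ℕ) : SimpleGraph (Fin n × Fin m) where
  Adj x y := x.1 ≠ y.1
  symm := ⟨fun x y h => h.symm⟩
  loopless := ⟨fun x h => h rfl⟩

/-- `r` together with the strictly increasing thresholds `θ₁ < ⋯ < θ_k` is a
`(θ₁, …, θ_k)`-representation of `G`: for distinct `u v`, `uv` is an edge iff the
number of thresholds not exceeding `r u + r v` is odd. -/
def IsRep {V : Type*} {k : ℕ} (G : SimpleGraph V) (θ : Fin k → ℝ) (r : V → ℝ) : Prop :=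
  StrictMono θ ∧ ∀ u v : V, u ≠ v →
    (G.Adj u v ↔ Odd (Finset.univ.filter (fun i => θ i ≤ r u + r v)).card)

/-- `G` is a `k`-threshold graph. -/
def IsKThreshold {V : Type*} (G : SimpleGraph V) (k : ℕ) : Prop :=
  ∃ (θ : Fin k → ℝ) (r : V → ℝ), IsRep G θ r

/-- The threshold number `Θ(G)`: the least `k` for which `G` is a `k`-threshold graph. -/
noncomputable def thresholdNumber {V : Type*} (G : SimpleGraph V) : ℕ :=
  sInf {k | IsKThreshold G k}

/-- The 1-based color of an edge with rank sum `s`: it equals `i` exactly when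
`s ∈ [θ_{2i-1}, θ_{2i})` (1-based indexing, with `θ_{k+1} = ∞`), i.e. when the number
of thresholds not exceeding `s` equals `2i - 1`. -/
noncomputable def edgeColor {k : ℕ} (θ : Fin k → ℝ) (s : ℝ) : ℕ :=
  ((Finset.univ.filter (fun i => θ i ≤ s)).card + 1) / 2

/-- The 1-based color of a nonedge with rank sum `s`: it equals `i` exactly when
`s ∈ [θ_{2i-2}, θ_{2i-1})` (1-based indexing, with `θ₀ = -∞`), i.e. when the number
of thresholds not exceeding `s` equals `2i - 2`. -/
noncomputable def nonedgeColor {k : ℕ} (θ : Fin k → ℝ) (s : ℝ) : ℕ :=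
  (Finset.univ.filter (fun i => θ i ≤ s)).card / 2 + 1

/-- The multiset of colors on the three edges of the `t`-th triangle of `nK₃`. -/
noncomputable def triColors3 {n k : ℕ} (θ : Fin k → ℝ) (r : Fin n × Fin 3 → ℝ) (t : Fin n) :
    Multiset ℕ :=
  {edgeColor θ (r (t, 0) + r (t, 1)), edgeColor θ (r (t, 0) + r (t, 2)),
    edgeColor θ (r (t, 1) + r (t, 2))}

/-- The multiset of colors on the three nonedges of the `t`-th part of `K_{n×3}`. -/
noncomputable def partColors3 {n k : ℕ} (θ : Fin k → ℝ) (r : Fin n × Fin 3 → ℝ) (t : Fin n) :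
    Multiset ℕ :=
  {nonedgeColor θ (r (t, 0) + r (t, 1)), nonedgeColor θ (r (t, 0) + r (t, 2)),
    nonedgeColor θ (r (t, 1) + r (t, 2))}

/-! Write `N s` for the number of thresholds at most `s`. It is monotone, odd on the rank sums
of edges and even on those of non-edges, and on an edge the color determines `N`. Sort the
ranks `a ≤ b ≤ c` and `x ≤ y ≤ z` of two triangles of the same color; then `N (a + b) = N (x + y)`,
`N (a + c) = N (x + z)`, `N (b + c) = N (y + z)`, and we may assume `z ≤ c`. If `y ≤ b`, then
`N (y + z) ≤ N (b + z) ≤ N (b + c) = N (y + z)` pins the even `N (b + z)` to an odd value, so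
`b < y`; likewise `a < x`. Now `N (a + b) ≤ N (a + y) ≤ N (x + y) = N (a + b)` does the same to
the even `N (a + y)`. -/

noncomputable def thresholdCount {k : ℕ} (θ : Fin k → ℝ) (s : ℝ) : ℕ :=
  (Finset.univ.filter (fun i => θ i ≤ s)).card

lemma thresholdCount_mono {k : ℕ} (θ : Fin k → ℝ) : Monotone (thresholdCount θ) :=
  fun _ _ hst => card_le_card <| Finset.monotone_filter_right _ fun _ _ hi => hi.trans hst

lemma edgeColor_mono {k : ℕ} (θ : Fin k → ℝ) : Monotone (edgeColor θ) :=
  fun _ _ hst => Nat.div_le_div_right (Nat.add_le_add_right (thresholdCount_mono θ hst) 1)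

lemma thresholdCount_eq_of_edgeColor_eq {k : ℕ} {θ : Fin k → ℝ} {s t : ℝ}
    (hs : Odd (thresholdCount θ s)) (ht : Odd (thresholdCount θ t))
    (h : edgeColor θ s = edgeColor θ t) : thresholdCount θ s = thresholdCount θ t := by
  obtain ⟨a, ha⟩ := hs
  obtain ⟨b, hb⟩ := ht
  have h' : (thresholdCount θ s + 1) / 2 = (thresholdCount θ t + 1) / 2 := h
  omega

lemma sorted_triple_eq_of_multiset_eq {α : Type*} [PartialOrder α] {a b c a' b' c' : α}
    (hab : a ≤ b) (hbc : b ≤ c) (hab' : a' ≤ b') (hbc' : b' ≤ c')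
    (h : ({a, b, c} : Multiset α) = {a', b', c'}) :
    a = a' ∧ b = b' ∧ c = c' := by
  have hsorted : ∀ {x y z : α}, x ≤ y → y ≤ z → [x, y, z].Pairwise (· ≤ ·) := fun hxy hyz => by
    simp [hxy, hyz, hxy.trans hyz]
  simpa using (Multiset.coe_eq_coe.mp h).eq_of_pairwise' (hsorted hab hbc) (hsorted hab' hbc')

def mapPairSums {α : Type*} (F : ℝ → α) (v : Fin 3 → ℝ) : Multiset α :=
  {F (v 0 + v 1), F (v 0 + v 2), F (v 1 + v 2)}

lemma mapPairSums_comp_perm {α : Type*} (F : ℝ → α) (v : Fin 3 → ℝ) (σ : Equiv.Perm (Fin 3)) :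
    mapPairSums F (v ∘ σ) = mapPairSums F v := by
  have h01 : σ 0 ≠ σ 1 := σ.injective.ne (by decide)
  have h02 : σ 0 ≠ σ 2 := σ.injective.ne (by decide)
  have h12 : σ 1 ≠ σ 2 := σ.injective.ne (by decide)
  simp only [mapPairSums, Function.comp_apply]
  generalize σ 0 = i at *
  generalize σ 1 = j at *
  generalize σ 2 = l at *
  -- the non-injective assignments die on `h01 h02 h12`; the six permutations reorder the multiset
  fin_cases i <;> fin_cases j <;> fin_cases l <;>
    simp only [Fin.zero_eta, Fin.mk_one, Fin.reduceFinMk, ne_eq, not_true_eq_false] at * <;>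
    simp only [Multiset.insert_eq_cons, ← Multiset.cons_zero, add_comm (v 1) (v 0),
      add_comm (v 2) (v 0), add_comm (v 2) (v 1), Multiset.cons_swap]
  all_goals exact congrArg _ (Multiset.cons_swap _ _ _)

lemma triColors3_eq_mapPairSums {n k : ℕ} (θ : Fin k → ℝ) (r : Fin n × Fin 3 → ℝ) (t : Fin n) :
    triColors3 θ r t = mapPairSums (edgeColor θ) (fun i => r (t, i)) := rfl

lemma lt_of_parity_ne_of_monotone {α : Type*} [LinearOrder α] {N : α → ℕ} (hN : Monotone N)
    {s t u : α} (htu : t ≤ u) (hus : N u = N s) (hs : Odd (N s)) (ht : Even (N t)) : t < s := by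
  by_contra! hst
  have hts : N t = N s := le_antisymm (hus ▸ hN htu) (hN hst)
  exact Nat.not_even_iff_odd.mpr hs (hts ▸ ht)

lemma false_of_pairSum_counts_eq {N : ℝ → ℕ} (hN : Monotone N) {v w : Fin 3 → ℝ}
    (hw : Monotone w) (hwv : w 2 ≤ v 2)
    (hv_odd : ∀ i j, i ≠ j → Odd (N (v i + v j))) (hw_odd : ∀ i j, i ≠ j → Odd (N (w i + w j)))
    (hvw_even : ∀ i j, Even (N (v i + w j)))
    (h01 : N (v 0 + v 1) = N (w 0 + w 1)) (h02 : N (v 0 + v 2) = N (w 0 + w 2))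
    (h12 : N (v 1 + v 2) = N (w 1 + w 2)) : False := by
  have hw01 : w 0 ≤ w 1 := hw (by decide)
  have hv1_lt : v 1 + w 2 < w 1 + w 2 :=
    lt_of_parity_ne_of_monotone hN (by linarith) h12 (hw_odd 1 2 (by decide)) (hvw_even 1 2)
  have hv0_lt : v 0 + w 2 < w 0 + w 2 :=
    lt_of_parity_ne_of_monotone hN (by linarith) h02 (hw_odd 0 2 (by decide)) (hvw_even 0 2)
  have hw1_lt : v 0 + w 1 < v 0 + v 1 :=
    lt_of_parity_ne_of_monotone hN (by linarith) h01.symm (hv_odd 0 1 (by decide))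
      (hvw_even 0 1)
  linarith

lemma thresholdCount_pairSums_eq {k : ℕ} (θ : Fin k → ℝ) {v w : Fin 3 → ℝ}
    (hv : Monotone v) (hw : Monotone w)
    (hv_odd : ∀ i j, i ≠ j → Odd (thresholdCount θ (v i + v j)))
    (hw_odd : ∀ i j, i ≠ j → Odd (thresholdCount θ (w i + w j)))
    (h : mapPairSums (edgeColor θ) v = mapPairSums (edgeColor θ) w) :
    thresholdCount θ (v 0 + v 1) = thresholdCount θ (w 0 + w 1) ∧
      thresholdCount θ (v 0 + v 2) = thresholdCount θ (w 0 + w 2) ∧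
      thresholdCount θ (v 1 + v 2) = thresholdCount θ (w 1 + w 2) := by
  have sorted_colors : ∀ u : Fin 3 → ℝ, Monotone u →
      edgeColor θ (u 0 + u 1) ≤ edgeColor θ (u 0 + u 2) ∧
        edgeColor θ (u 0 + u 2) ≤ edgeColor θ (u 1 + u 2) := fun u hu =>
    ⟨edgeColor_mono θ (add_le_add_right (hu (by decide : (1 : Fin 3) ≤ 2)) _),
      edgeColor_mono θ (add_le_add_left (hu (by decide : (0 : Fin 3) ≤ 1)) _)⟩
  obtain ⟨hv₁, hv₂⟩ := sorted_colors v hv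
  obtain ⟨hw₁, hw₂⟩ := sorted_colors w hw
  obtain ⟨e01, e02, e12⟩ := sorted_triple_eq_of_multiset_eq hv₁ hv₂ hw₁ hw₂ h
  exact ⟨thresholdCount_eq_of_edgeColor_eq (hv_odd 0 1 (by decide)) (hw_odd 0 1 (by decide)) e01,
    thresholdCount_eq_of_edgeColor_eq (hv_odd 0 2 (by decide)) (hw_odd 0 2 (by decide)) e02,
    thresholdCount_eq_of_edgeColor_eq (hv_odd 1 2 (by decide)) (hw_odd 1 2 (by decide)) e12⟩

lemma odd_thresholdCount_of_isRep_copiesK {n m k : ℕ} {θ : Fin k → ℝ} {r : Fin n × Fin m → ℝ}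
    (hrep : IsRep (copiesK n m) θ r) (t : Fin n) {i j : Fin m} (hij : i ≠ j) :
    Odd (thresholdCount θ (r (t, i) + r (t, j))) :=
  have hne : (t, i) ≠ (t, j) := fun h => hij (congrArg Prod.snd h)
  (hrep.2 _ _ hne).mp ⟨rfl, hne⟩

lemma even_thresholdCount_of_isRep_copiesK {n m k : ℕ} {θ : Fin k → ℝ} {r : Fin n × Fin m → ℝ}
    (hrep : IsRep (copiesK n m) θ r) {t t' : Fin n} (htt' : t ≠ t') (i j : Fin m) :
    Even (thresholdCount θ (r (t, i) + r (t', j))) :=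
  Nat.not_odd_iff_even.mp fun h =>
    htt' ((hrep.2 _ _ fun h' => htt' (congrArg Prod.fst h')).mpr h).1

/-- In any `(θ₁, …, θ_k)`-representation of `nK₃`, no two distinct triangles have
the same multiset of colors on their edges. -/
theorem stmt5 (n k : ℕ) (θ : Fin k → ℝ) (r : Fin n × Fin 3 → ℝ)
    (hrep : IsRep (copiesK n 3) θ r) :
    ∀ t₁ t₂ : Fin n, t₁ ≠ t₂ → triColors3 θ r t₁ ≠ triColors3 θ r t₂ := by
  intro t₁ t₂ hne hcol
  set v := (fun i => r (t₁, i)) ∘ Tuple.sort (fun i => r (t₁, i))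
  set w := (fun i => r (t₂, i)) ∘ Tuple.sort (fun i => r (t₂, i))
  have hv_odd : ∀ i j, i ≠ j → Odd (thresholdCount θ (v i + v j)) := fun _ _ hij =>
    odd_thresholdCount_of_isRep_copiesK hrep t₁ ((Tuple.sort _).injective.ne hij)
  have hw_odd : ∀ i j, i ≠ j → Odd (thresholdCount θ (w i + w j)) := fun _ _ hij =>
    odd_thresholdCount_of_isRep_copiesK hrep t₂ ((Tuple.sort _).injective.ne hij)
  have hvw_even : ∀ i j, Even (thresholdCount θ (v i + w j)) := fun _ _ =>
    even_thresholdCount_of_isRep_copiesK hrep hne _ _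
  have hcol' : mapPairSums (edgeColor θ) v = mapPairSums (edgeColor θ) w := by
    rwa [mapPairSums_comp_perm, mapPairSums_comp_perm, ← triColors3_eq_mapPairSums,
      ← triColors3_eq_mapPairSums]
  obtain ⟨h01, h02, h12⟩ := thresholdCount_pairSums_eq θ (Tuple.monotone_sort _)
    (Tuple.monotone_sort _) hv_odd hw_odd hcol'
  rcases le_total (w 2) (v 2) with h | h
  · exact false_of_pairSum_counts_eq (thresholdCount_mono θ) (Tuple.monotone_sort _) h
      hv_odd hw_odd hvw_even h01 h02 h12
  · exact false_of_pairSum_counts_eq (thresholdCount_mono θ) (Tuple.monotone_sort _) h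
      hw_odd hv_odd (fun i j => add_comm (v j) (w i) ▸ hvw_even j i) h01.symm h02.symm h12.symm
end

section
/- In any (θ₁, θ₂, …, θ_{2m−1})-representation of nK₃ with θ₁ < θ₂ < ⋯ < θ_{2m−1}, at most one triangle contains an edge of color m, i.e., at most one triangle contains an edge uv with r_u + r_v ≥ θ_{2m−1}. -/
/-!
Vertices in different triangles are nonadjacent, so their rank sum lies below the top threshold
`θ_{2m-1}`: otherwise all `2m - 1` thresholds lie below it, an odd number. If an edge `ab` of one
triangle and an edge `cd` of another both reach `θ_{2m-1}`, the cross pairs `ac` and `bd` have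
total rank sum `r_a + r_b + r_c + r_d ≥ 2 θ_{2m-1}`, so one of them reaches it as well.
-/

open Finset

theorem IsRep.add_lt_of_not_adj {V : Type*} {G : SimpleGraph V} {k : ℕ} {θ : Fin k → ℝ}
    {r : V → ℝ} (hrep : IsRep G θ r) (hk : Odd k) (i : Fin k) (hi : (i : ℕ) + 1 = k)
    {u v : V} (huv : u ≠ v) (hnadj : ¬ G.Adj u v) : r u + r v < θ i := by
  by_contra! hle
  apply hnadj
  have hall : univ.filter (fun j => θ j ≤ r u + r v) = univ :=
    filter_true_of_mem fun j _ => (hrep.1.monotone (Fin.le_def.2 (by omega))).trans hle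
  rw [hrep.2 u v huv, hall, card_univ, Fintype.card_fin]
  exact hk

theorem copiesK_not_adj_of_fst_ne {n m : ℕ} {x y : Fin n × Fin m} (h : x.1 ≠ y.1) :
    ¬ (copiesK n m).Adj x y :=
  fun hxy => h hxy.1

/-- In any `(θ₁, …, θ_{2m-1})`-representation of `nK₃`, at most one triangle
contains an edge `uv` with `r_u + r_v ≥ θ_{2m-1}` (i.e. of color `m`). -/
theorem stmt11 (n m : ℕ) (hm : 1 ≤ m) (θ : Fin (2 * m - 1) → ℝ)
    (r : Fin n × Fin 3 → ℝ) (hrep : IsRep (copiesK n 3) θ r)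
    (t₁ t₂ : Fin n)
    (h₁ : ∃ a b : Fin 3, a ≠ b ∧ θ ⟨2 * m - 2, by omega⟩ ≤ r (t₁, a) + r (t₁, b))
    (h₂ : ∃ a b : Fin 3, a ≠ b ∧ θ ⟨2 * m - 2, by omega⟩ ≤ r (t₂, a) + r (t₂, b)) :
    t₁ = t₂ := by
  obtain ⟨a, b, -, hab⟩ := h₁
  obtain ⟨c, d, -, hcd⟩ := h₂
  by_contra hne
  have hcross : ∀ x y : Fin 3, r (t₁, x) + r (t₂, y) < θ ⟨2 * m - 2, by omega⟩ := fun x y =>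
    hrep.add_lt_of_not_adj ⟨m - 1, by omega⟩ _ (by simp only; omega)
      (fun h => hne (congrArg Prod.fst h)) (copiesK_not_adj_of_fst_ne hne)
  linarith [hcross a c, hcross b d]
end

section
/- In any (θ₁, θ₂, …, θ_m)-representation of K_{n×3} with θ₁ < θ₂ < ⋯ < θ_m, at most one part contains a nonedge of color 1, i.e., at most one part contains a nonedge xy with r_x + r_y < θ₁. -/
open Finset

/-!
An edge `uv` of a representation has an odd, hence positive, number of thresholds below
`r u + r v`, so `θ₁ ≤ r u + r v`. If two distinct parts had nonedges `ab` and `cd` of color 1,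
then `r a + r b + r c + r d < 2 θ₁`; but the same sum is `(r a + r c) + (r b + r d)`, and
`ac`, `bd` are edges of `K_{n×3}`, so it is at least `2 θ₁`.
-/

theorem IsRep.le_add_of_adj {V : Type*} {k : ℕ} {G : SimpleGraph V} {θ : Fin k → ℝ}
    {r : V → ℝ} (hrep : IsRep G θ r) {u v : V} (huv : G.Adj u v) (hk : 0 < k) :
    θ ⟨0, hk⟩ ≤ r u + r v := by
  obtain ⟨j, hj⟩ := (hrep.2 u v (G.ne_of_adj huv)).mp huv
  obtain ⟨i, hi⟩ : (univ.filter fun i => θ i ≤ r u + r v).Nonempty :=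
    card_pos.mp (by omega)
  exact (hrep.1.monotone (Fin.le_iff_val_le_val.mpr (Nat.zero_le _))).trans (mem_filter.mp hi).2

/-- In any `(θ₁, …, θ_m)`-representation of `K_{n×3}`, at most one part contains
a nonedge `xy` with `r_x + r_y < θ₁` (i.e. of color `1`). -/
theorem stmt12 (n m : ℕ) (hm : 1 ≤ m) (θ : Fin m → ℝ)
    (r : Fin n × Fin 3 → ℝ) (hrep : IsRep (completeMulti n 3) θ r)
    (t₁ t₂ : Fin n)
    (h₁ : ∃ a b : Fin 3, a ≠ b ∧ r (t₁, a) + r (t₁, b) < θ ⟨0, by omega⟩)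
    (h₂ : ∃ a b : Fin 3, a ≠ b ∧ r (t₂, a) + r (t₂, b) < θ ⟨0, by omega⟩) :
    t₁ = t₂ := by
  by_contra hne
  obtain ⟨a, b, -, hab⟩ := h₁
  obtain ⟨c, d, -, hcd⟩ := h₂
  have hac := hrep.le_add_of_adj (u := (t₁, a)) (v := (t₂, c)) hne hm
  have hbd := hrep.le_add_of_adj (u := (t₁, b)) (v := (t₂, d)) hne hm
  linarith
end

section
/- In any (θ₁, θ₂, …, θ_{2m})-representation of K_{n×3} with θ₁ < θ₂ < ⋯ < θ_{2m}, at most one part contains a nonedge of color m+1, i.e., at most one part contains a nonedge xy with r_x + r_y ≥ θ_{2m}. -/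
open Finset

/- A nonedge of weight at least the top threshold `θ_{2m}` has an endpoint `v` with
`2 r_v ≥ θ_{2m}`. Two such vertices in different parts would span an edge whose rank sum
lies above every threshold, so an even number `2m` of thresholds lies below it, and the
representation would make it a nonedge. -/

lemma le_two_mul_or_le_two_mul_of_le_add {c a b : ℝ} (h : c ≤ a + b) :
    c ≤ 2 * a ∨ c ≤ 2 * b := by
  by_contra! h'
  linarith

lemma card_filter_le_eq_of_le_top {k : ℕ} {θ : Fin k → ℝ} (hθ : Monotone θ) {L : Fin k}
    (hL : IsTop L) {s : ℝ} (hs : θ L ≤ s) :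
    (univ.filter (fun i => θ i ≤ s)).card = k := by
  rw [filter_true_of_mem fun i _ => (hθ (hL i)).trans hs, card_univ, Fintype.card_fin]

lemma IsRep.not_adj_of_top_le {V : Type*} {G : SimpleGraph V} {k : ℕ} {θ : Fin k → ℝ}
    {r : V → ℝ} (hrep : IsRep G θ r) (hk : Even k) {L : Fin k} (hL : IsTop L)
    {u v : V} (huv : u ≠ v) (hs : θ L ≤ r u + r v) : ¬ G.Adj u v := by
  rw [hrep.2 u v huv, card_filter_le_eq_of_le_top hrep.1.monotone hL hs, Nat.not_odd_iff_even]
  exact hk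

/-- In any `(θ₁, …, θ_{2m})`-representation of `K_{n×3}`, at most one part contains
a nonedge `xy` with `r_x + r_y ≥ θ_{2m}` (i.e. of color `m+1`). -/
theorem stmt13 (n m : ℕ) (hm : 1 ≤ m) (θ : Fin (2 * m) → ℝ)
    (r : Fin n × Fin 3 → ℝ) (hrep : IsRep (completeMulti n 3) θ r)
    (t₁ t₂ : Fin n)
    (h₁ : ∃ a b : Fin 3, a ≠ b ∧ θ ⟨2 * m - 1, by omega⟩ ≤ r (t₁, a) + r (t₁, b))
    (h₂ : ∃ a b : Fin 3, a ≠ b ∧ θ ⟨2 * m - 1, by omega⟩ ≤ r (t₂, a) + r (t₂, b)) :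
    t₁ = t₂ := by
  set L : Fin (2 * m) := ⟨2 * m - 1, by omega⟩
  have hL : IsTop L := fun i => Fin.le_def.mpr (by simp only [L]; omega)
  have high_vertex : ∀ t : Fin n, (∃ a b : Fin 3, a ≠ b ∧ θ L ≤ r (t, a) + r (t, b)) →
      ∃ x, θ L ≤ 2 * r (t, x) := by
    rintro t ⟨a, b, -, hab⟩
    exact (le_two_mul_or_le_two_mul_of_le_add hab).elim (⟨a, ·⟩) (⟨b, ·⟩)
  obtain ⟨x, hx⟩ := high_vertex t₁ h₁
  obtain ⟨y, hy⟩ := high_vertex t₂ h₂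
  by_contra hne
  exact hrep.not_adj_of_top_le (even_two_mul m) hL (u := (t₁, x)) (v := (t₂, y))
    (fun h => hne (congrArg Prod.fst h)) (by linarith) hne
end

section
/- Let {a₁, a₂, …, a_m} ⊂ ℝ be a set of reals that is linearly independent over ℚ. Suppose i, j, k ∈ {1, …, m} are either all equal or all distinct, r, s, t ∈ {1, …, m} are either all equal or all distinct, and the multisets {i, j, k} and {r, s, t} are different. Then for every ℓ ∈ {1, …, m}, (a_i + a_j − a_k)/2 + (a_r + a_s − a_t)/2 ≠ a_ℓ. Consequently, in an {a₁, …, a_m}-assignment of nK₃, the edge rank sums and the nonedge rank sums do not coincide. -/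
open Finset

/-- The multiset of the three edge rank sums of the `t`-th triangle of `nK₃`. -/
def triSums3 {n : ℕ} (r : Fin n × Fin 3 → ℝ) (t : Fin n) : Multiset ℝ :=
  {r (t, 0) + r (t, 1), r (t, 0) + r (t, 2), r (t, 1) + r (t, 2)}

/-- `r` is an `{a₁, …, a_m}`-assignment of `nK₃`: each triangle has edge rank sums
`a_i, a_i, a_i` or `a_i, a_j, a_k` with `i, j, k` distinct, and no two triangles have
the same multiset of edge rank sums. -/
def IsAssignment3 {m n : ℕ} (a : Fin m → ℝ) (r : Fin n × Fin 3 → ℝ) : Prop :=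
  (∀ t : Fin n, ∃ i j k : Fin m,
      ((i = j ∧ j = k) ∨ (i ≠ j ∧ i ≠ k ∧ j ≠ k)) ∧
      triSums3 r t = {a i, a j, a k}) ∧
  ∀ t₁ t₂ : Fin n, t₁ ≠ t₂ → triSums3 r t₁ ≠ triSums3 r t₂

/-!
Doubling, `(a_i + a_j - a_k)/2 + (a_p + a_q - a_t)/2 = a_l` reads
`(a_i + a_j + a_k) + (a_p + a_q + a_t) = 2 (a_k + a_t + a_l)`, which by `ℚ`-independence is the
multiset identity `{i,j,k} + {p,q,t} = 2 {k,t,l}`. So every index occurs in `{i,j,k}` and in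
`{p,q,t}` with multiplicities of equal parity. In a multiset of three equal or three distinct
elements, the elements of odd multiplicity are exactly its members, and such a multiset is
determined by its support; hence `{i,j,k} = {p,q,t}`.

In an assignment every vertex rank is `(a_x + a_y - a_z)/2` where `a_x, a_y` are the edge rank
sums at the vertex and `a_z` the opposite one, every edge rank sum is some `a_l`, and distinct
triangles carry distinct index multisets, so the first part applies to any nonedge.
-/

namespace Multiset

variable {α : Type*}

def IsConstOrNodup (s : Multiset α) : Prop :=
  (∃ x, s = replicate (card s) x) ∨ s.Nodup

theorem isConstOrNodup_triple {i j k : α} (h : (i = j ∧ j = k) ∨ (i ≠ j ∧ i ≠ k ∧ j ≠ k)) :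
    IsConstOrNodup ({i, j, k} : Multiset α) := by
  rcases h with ⟨rfl, rfl⟩ | ⟨hij, hik, hjk⟩
  · exact Or.inl ⟨i, rfl⟩
  · exact Or.inr (by simp [hij, hik, hjk])

theorem eq_of_mem_iff_of_eq_replicate {s t : Multiset α} {x : α} (hs : s = replicate (card s) x)
    (hcard : card s = card t) (hmem : ∀ v, v ∈ s ↔ v ∈ t) : s = t := by
  rw [hs, eq_comm, eq_replicate]
  exact ⟨hcard.symm, fun b hb => eq_of_mem_replicate (hs ▸ (hmem b).mpr hb)⟩

theorem IsConstOrNodup.eq_of_mem_iff {s t : Multiset α} (hs : s.IsConstOrNodup)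
    (ht : t.IsConstOrNodup) (hcard : card s = card t) (hmem : ∀ v, v ∈ s ↔ v ∈ t) : s = t := by
  rcases hs with ⟨x, hx⟩ | hs
  · exact eq_of_mem_iff_of_eq_replicate hx hcard hmem
  rcases ht with ⟨y, hy⟩ | ht
  · exact (eq_of_mem_iff_of_eq_replicate hy hcard.symm fun v => (hmem v).symm).symm
  · exact (Nodup.ext hs ht).mpr hmem

theorem exists_eq_triple_of_map_eq {β : Type*} {f : α → β} {s : Multiset α} {b₁ b₂ b₃ : β}
    (h : s.map f = {b₁, b₂, b₃}) :
    ∃ x y z, s = {x, y, z} ∧ f x = b₁ ∧ f y = b₂ ∧ f z = b₃ := by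
  classical
  obtain ⟨x, hx, hfx, h⟩ := (map_eq_cons f s _ b₁).mpr h
  obtain ⟨y, hy, hfy, h⟩ := (map_eq_cons f _ _ b₂).mpr h
  obtain ⟨z, hz, hfz⟩ := map_eq_singleton.mp h
  refine ⟨x, y, z, ?_, hfx, hfy, hfz⟩
  rw [← cons_erase hx, ← cons_erase hy, hz]
  rfl

variable [DecidableEq α]

theorem IsConstOrNodup.mem_iff_odd_count {s : Multiset α} (hs : s.IsConstOrNodup)
    (hodd : Odd (card s)) (v : α) : v ∈ s ↔ Odd (count v s) := by
  rcases hs with ⟨x, hx⟩ | hs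
  · rw [hx, count_replicate, mem_replicate]
    by_cases hv : v = x
    · simp [hv, hodd, hodd.pos.ne']
    · simp [hv, Ne.symm hv]
  · by_cases hv : v ∈ s
    · simp [count_eq_one_of_mem hs hv, hv]
    · simp [hv]

theorem IsConstOrNodup.eq_of_add_eq_add_self {s t u : Multiset α} (hs : s.IsConstOrNodup)
    (ht : t.IsConstOrNodup) (hcard : card s = card t) (hodd : Odd (card s))
    (h : s + t = u + u) : s = t := by
  refine hs.eq_of_mem_iff ht hcard fun v => ?_
  have hv := congr_arg (count v) h
  rw [count_add, count_add] at hv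
  rw [hs.mem_iff_odd_count hodd, ht.mem_iff_odd_count (hcard ▸ hodd), Nat.odd_iff, Nat.odd_iff]
  omega

theorem sum_map_eq_linearCombination_toFinsupp {M : Type*} [AddCommMonoid M] (a : α → M)
    (s : Multiset α) : (s.map a).sum = Finsupp.linearCombination ℕ a (toFinsupp s) := by
  induction s using Multiset.induction_on with
  | empty => simp
  | cons x s ih => simp [← singleton_add, ih]

end Multiset

theorem LinearIndependent.multiset_eq_of_sum_map_eq {ι M : Type*} [DecidableEq ι]
    [AddCommMonoid M] {a : ι → M} (ha : LinearIndependent ℕ a) {s t : Multiset ι}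
    (h : (s.map a).sum = (t.map a).sum) : s = t := by
  rw [Multiset.sum_map_eq_linearCombination_toFinsupp,
    Multiset.sum_map_eq_linearCombination_toFinsupp] at h
  exact Multiset.toFinsupp.injective (ha h)

theorem half_sum_ne_of_linearIndependent {ι K : Type*} [Field K] [CharZero K] {a : ι → K}
    (ha : LinearIndependent ℚ a) {i j k p q t : ι}
    (hX : Multiset.IsConstOrNodup ({i, j, k} : Multiset ι))
    (hY : Multiset.IsConstOrNodup ({p, q, t} : Multiset ι))
    (hne : ({i, j, k} : Multiset ι) ≠ {p, q, t}) (l : ι) :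
    (a i + a j - a k) / 2 + (a p + a q - a t) / 2 ≠ a l := by
  classical
  intro h
  refine hne (hX.eq_of_add_eq_add_self hY rfl (by simp [Nat.odd_iff])
    (u := ({k, t, l} : Multiset ι)) ?_)
  refine (ha.restrict_scalars' (R := ℕ)).multiset_eq_of_sum_map_eq ?_
  simp only [Multiset.insert_eq_cons, Multiset.map_add, Multiset.map_cons,
    Multiset.map_singleton, Multiset.sum_add, Multiset.sum_cons, Multiset.sum_singleton]
  linear_combination 2 * h

theorem exists_rank_eq_of_triSums3_eq_map {ι : Type*} {n : ℕ} {a : ι → ℝ}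
    {r : Fin n × Fin 3 → ℝ} {t : Fin n} {X : Multiset ι} (h : triSums3 r t = X.map a)
    (c : Fin 3) : ∃ x y z, X = {x, y, z} ∧ r (t, c) = (a x + a y - a z) / 2 := by
  obtain ⟨x, y, z, rfl, hx, hy, hz⟩ := Multiset.exists_eq_triple_of_map_eq h.symm
  fin_cases c
  · exact ⟨x, y, z, rfl, by simp; linarith⟩
  · exact ⟨x, z, y, congrArg (Multiset.cons x) (Multiset.pair_comm y z), by simp; linarith⟩
  · refine ⟨y, z, x, ?_, by simp; linarith⟩
    exact (Multiset.cons_swap x y _).trans (congrArg (Multiset.cons y) (Multiset.pair_comm x z))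

theorem add_mem_triSums3 {n : ℕ} (r : Fin n × Fin 3 → ℝ) {u v : Fin n × Fin 3}
    (h₁ : u.1 = v.1) (h₂ : u ≠ v) : r u + r v ∈ triSums3 r u.1 := by
  obtain ⟨t, c⟩ := u
  obtain ⟨t', c'⟩ := v
  obtain rfl : t = t' := h₁
  replace h₂ : c ≠ c' := fun h => h₂ (by rw [h])
  wlog hlt : c < c' generalizing c c'
  · rw [add_comm (r (t, c))]
    exact this c' c h₂.symm (h₂.symm.lt_of_le (not_lt.mp hlt))
  fin_cases c <;> fin_cases c' <;> simp_all [triSums3]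

theorem IsAssignment3.exists_eq_map {m n : ℕ} {a : Fin m → ℝ} {r : Fin n × Fin 3 → ℝ}
    (hA : IsAssignment3 a r) (t : Fin n) :
    ∃ X : Multiset (Fin m), X.IsConstOrNodup ∧ triSums3 r t = X.map a := by
  obtain ⟨i, j, k, hijk, h⟩ := hA.1 t
  exact ⟨{i, j, k}, Multiset.isConstOrNodup_triple hijk, by simp [h]⟩

theorem IsAssignment3.add_ne_add {m n : ℕ} {a : Fin m → ℝ} (ha : LinearIndependent ℚ a)
    {r : Fin n × Fin 3 → ℝ} (hA : IsAssignment3 a r) {x y u v : Fin n × Fin 3}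
    (hxy : x.1 ≠ y.1) (huv₁ : u.1 = v.1) (huv₂ : u ≠ v) : r x + r y ≠ r u + r v := by
  obtain ⟨U, -, hU⟩ := hA.exists_eq_map u.1
  obtain ⟨l, -, hl⟩ := Multiset.mem_map.mp (hU ▸ add_mem_triSums3 r huv₁ huv₂)
  obtain ⟨X, hXs, hX⟩ := hA.exists_eq_map x.1
  obtain ⟨Y, hYs, hY⟩ := hA.exists_eq_map y.1
  obtain ⟨i, j, k, rfl, hx⟩ := exists_rank_eq_of_triSums3_eq_map hX x.2
  obtain ⟨p, q, t, rfl, hy⟩ := exists_rank_eq_of_triSums3_eq_map hY y.2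
  have hne : ({i, j, k} : Multiset (Fin m)) ≠ {p, q, t} :=
    fun h => hA.2 _ _ hxy (by rw [hX, hY, h])
  rw [hx, hy, ← hl]
  exact half_sum_ne_of_linearIndependent ha hXs hYs hne l

/-- If `{a₁, …, a_m}` is linearly independent over `ℚ`, then for index triples
`i, j, k` and `r, s, t` that are each all equal or all distinct, with different
multisets, `(a_i + a_j - a_k)/2 + (a_r + a_s - a_t)/2 ≠ a_ℓ` for every `ℓ`;
consequently, in an `{a₁, …, a_m}`-assignment of `nK₃` the edge and nonedge rank
sums do not coincide. -/
theorem stmt14 (m : ℕ) (a : Fin m → ℝ) (ha : LinearIndependent ℚ a) :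
    (∀ i j k p q t : Fin m,
      ((i = j ∧ j = k) ∨ (i ≠ j ∧ i ≠ k ∧ j ≠ k)) →
      ((p = q ∧ q = t) ∨ (p ≠ q ∧ p ≠ t ∧ q ≠ t)) →
      ({i, j, k} : Multiset (Fin m)) ≠ {p, q, t} →
      ∀ l : Fin m, (a i + a j - a k) / 2 + (a p + a q - a t) / 2 ≠ a l) ∧
    (∀ (n : ℕ) (r : Fin n × Fin 3 → ℝ), IsAssignment3 a r →
      ∀ x y u v : Fin n × Fin 3, x.1 ≠ y.1 → u.1 = v.1 → u ≠ v →
        r x + r y ≠ r u + r v) :=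
  ⟨fun _ _ _ _ _ _ h₁ h₂ hne l => half_sum_ne_of_linearIndependent ha
      (Multiset.isConstOrNodup_triple h₁) (Multiset.isConstOrNodup_triple h₂) hne l,
    fun _ _ hA _ _ _ _ hxy huv₁ huv₂ => hA.add_ne_add ha hxy huv₁ huv₂⟩
end

section
/- Let {N, a₁, a₂, …, a_M} ⊂ ℝ be linearly independent over ℚ and set b_i = N − a_i for i = 1, 2, …, M. Let A = {a₁, …, a_M} and B = {b₁, …, b_M}. If Σ_{i=1}^{S} α_i x_i + β N = 0, where each α_i ∈ ℤ, each x_i ∈ A ∪ B, and β ∈ ℚ, then Σ_{i=1}^{S} α_i is even. -/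
/-!
The assignment `N ↦ 0`, `aᵢ ↦ 1` extends, by linear independence, to a `ℚ`-linear map
`f : ℝ → ℚ`. It sends every `aᵢ` to `1` and every `bᵢ` to `-1`, so applying it to the relation
gives `Σ αᵢ εᵢ = 0` with odd `εᵢ`, and modulo `2` this sum is `Σ αᵢ`.
-/

open Finset

theorem Int.even_sum_mul_iff_of_odd {ι : Type*} (s : Finset ι) (α ε : ι → ℤ)
    (hε : ∀ i ∈ s, Odd (ε i)) : Even (∑ i ∈ s, α i * ε i) ↔ Even (∑ i ∈ s, α i) := by
  simp only [← ZMod.intCast_eq_zero_iff_even, Int.cast_sum, Int.cast_mul]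
  rw [sum_congr rfl fun i hi => by rw [(ZMod.intCast_eq_one_iff_odd).2 (hε i hi), mul_one]]

theorem LinearIndependent.exists_linearMap_apply_eq {K V W ι : Type*} [DivisionRing K]
    [AddCommGroup V] [Module K V] [AddCommGroup W] [Module K W] {v : ι → V}
    (hv : LinearIndependent K v) (w : ι → W) : ∃ f : V →ₗ[K] W, ∀ i, f (v i) = w i := by
  obtain ⟨f, hf⟩ := LinearMap.exists_extend (Finsupp.linearCombination K w ∘ₗ hv.repr)
  refine ⟨f, fun i => ?_⟩
  have := LinearMap.congr_fun hf ⟨v i, Submodule.subset_span (Set.mem_range_self i)⟩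
  simpa [hv.repr_eq_single i] using this

/-- If `{N, a₁, …, a_M}` is linearly independent over `ℚ`, `b_i = N - a_i`, and
`Σ α_i x_i + β N = 0` with `α_i ∈ ℤ`, `x_i ∈ A ∪ B`, `β ∈ ℚ`, then `Σ α_i` is even. -/
theorem stmt19 (M : ℕ) (N : ℝ) (a : Fin M → ℝ)
    (hli : LinearIndependent ℚ (Fin.cons N a : Fin (M + 1) → ℝ))
    (b : Fin M → ℝ) (hb : ∀ i, b i = N - a i)
    (S : ℕ) (α : Fin S → ℤ) (x : Fin S → ℝ) (β : ℚ)
    (hx : ∀ i, x i ∈ Set.range a ∪ Set.range b)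
    (heq : (∑ i, (α i : ℝ) * x i) + (β : ℝ) * N = 0) :
    Even (∑ i, α i) := by
  obtain ⟨f, hf⟩ := hli.exists_linearMap_apply_eq (Fin.cons (0 : ℚ) 1)
  have hfN : f N = 0 := hf 0
  have hfa : ∀ j, f (a j) = 1 := fun j => hf j.succ
  have hsign : ∀ i, ∃ ε : ℤ, Odd ε ∧ f (x i) = ε := by
    intro i
    rcases hx i with ⟨j, hj⟩ | ⟨j, hj⟩
    · exact ⟨1, odd_one, by rw [← hj, hfa, Int.cast_one]⟩
    · exact ⟨-1, odd_neg_one, by rw [← hj, hb, map_sub, hfN, hfa]; norm_num⟩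
  choose ε hε_odd hfx using hsign
  have hterm : ∀ i, f ((α i : ℝ) * x i) = ((α i * ε i : ℤ) : ℚ) := fun i => by
    rw [← zsmul_eq_mul, map_zsmul, hfx, zsmul_eq_mul, Int.cast_mul]
  have hsum : ∑ i, α i * ε i = 0 := by
    have := congrArg f heq
    rw [map_add, map_sum, ← Rat.smul_def, map_smul, hfN, smul_zero, add_zero, map_zero] at this
    simp only [hterm] at this
    exact_mod_cast this
  exact (Int.even_sum_mul_iff_of_odd _ α ε fun i _ => hε_odd i).mp (hsum ▸ Even.zero)
end
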